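/- arXiv:2505.14801 — 3 statements merged into one kernel-verified Lean document; each statement's English description precedes it below -/
import Mathlib

section
/- Let d < n. The map N on triangular GT patterns with top row (n,…,n,0,…,0) (d copies of n) and constant weight vector (d,…,d), defined by (N(λ))_{i,j} = λ_{n−i, d+j−i} when j ≤ i ≤ d+j−1 and j ≤ n−d, (N(λ))_{i,j} = 0 when j > n−d, and (N(λ))_{i,j} = n when i > d+j−1 and j ≤ n−d, produces a valid GT pattern with top row consisting of n−d copies of n followed by zeros and constant weight vector (n−d,…,n−d). Moreover N_{n,n−d} ∘ N_{n,d} is the identity. -/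
/-!
Along a column of `λ ∈ Λ_{n,d}` entries grow towards the top row and along a diagonal they
shrink, so the top row forces `λ i j = 0` for `j > d` and `λ i j = n` for `j + (n - i) ≤ d`.
Away from these two blocks `N` reflects `λ` through `(i, j) ↦ (n - i, d + j - i)`, which maps
rows to rows and exchanges the two interlacing inequalities, so `N λ` is a GT pattern. Row `i`
of `N λ` is `(i - d)⁺` entries `n`, then the part of row `n - i` of `λ` between its two forced
blocks, then zeros; since that row of `λ` sums to `d (n - i)` and starts with `(d - i)⁺` entries
`n`, row `i` of `N λ` sums to `(n - d) i`. The reflection for `n - d` inverts the one for `d`,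
and `N_{n,n-d}` puts its constants exactly on the forced blocks of `λ`.
-/

/-- `L` is an integer triangular Gelfand-Tsetlin pattern of size `n`
(zero outside the triangle `1 ≤ j ≤ i ≤ n`). -/
def IsGTPattern (n : ℕ) (L : ℕ → ℕ → ℕ) : Prop :=
  (∀ i j, 1 ≤ j → j + 1 ≤ i → i ≤ n → L i (j + 1) ≤ L i j) ∧
  (∀ i j, 1 ≤ j → j ≤ i → i + 1 ≤ n →
    L i j ≤ L (i + 1) j ∧ L (i + 1) (j + 1) ≤ L i j) ∧
  (∀ i j, ¬(1 ≤ j ∧ j ≤ i ∧ i ≤ n) → L i j = 0)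

/-- The `i`-th row sum of a GT pattern. -/
def gtRowSum (L : ℕ → ℕ → ℕ) (i : ℕ) : ℕ :=
  ∑ j ∈ Finset.Icc 1 i, L i j

/-- Membership in `Λ_{n,d}`: a triangular GT pattern of size `n` with top row
`(n,…,n,0,…,0)` (`d` copies of `n`) and constant weight vector `(d,…,d)`. -/
def MemLambda (n d : ℕ) (L : ℕ → ℕ → ℕ) : Prop :=
  IsGTPattern n L ∧
  (∀ j, 1 ≤ j → j ≤ d → L n j = n) ∧
  (∀ j, d < j → j ≤ n → L n j = 0) ∧
  (∀ i, 1 ≤ i → i ≤ n → gtRowSum L i = d * i)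

/-- The Naimark map `N_{n,d}` on GT patterns. -/
def naimarkMap (n d : ℕ) (L : ℕ → ℕ → ℕ) : ℕ → ℕ → ℕ := fun i j =>
  if 1 ≤ j ∧ j ≤ i ∧ i ≤ n then
    (if n - d < j then 0
     else if d + j - 1 < i then n
     else L (n - i) (d + j - i))
  else 0

open Finset

theorem sum_Ioc_eq_nsmul_add_sum_Ioc {M : Type*} [AddCommMonoid M] (f : ℕ → M) {m : M}
    {a b c : ℕ} (hab : a ≤ b) (hbc : b ≤ c) (hconst : ∀ j, 0 < j → j ≤ a → f j = m)
    (hzero : ∀ j, b < j → j ≤ c → f j = 0) :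
    ∑ j ∈ Ioc 0 c, f j = a • m + ∑ j ∈ Ioc a b, f j := by
  have hhead : ∑ j ∈ Ioc 0 a, f j = a • m := by
    rw [sum_congr rfl fun j hj => hconst j (mem_Ioc.1 hj).1 (mem_Ioc.1 hj).2, sum_const,
      Nat.card_Ioc, Nat.sub_zero]
  have htail : ∑ j ∈ Ioc b c, f j = 0 :=
    sum_eq_zero fun j hj => hzero j (mem_Ioc.1 hj).1 (mem_Ioc.1 hj).2
  rw [← sum_Ioc_consecutive f (Nat.zero_le a) (hab.trans hbc), ← sum_Ioc_consecutive f hab hbc,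
    hhead, htail, add_zero]

variable {n d : ℕ} {L : ℕ → ℕ → ℕ} {i j : ℕ}

namespace IsGTPattern

theorem apply_le_apply_of_le (h : IsGTPattern n L) {i' : ℕ} (hj : 1 ≤ j) (hji : j ≤ i)
    (hii' : i ≤ i') (hi' : i' ≤ n) : L i j ≤ L i' j := by
  induction i', hii' using Nat.le_induction with
  | base => exact le_rfl
  | succ i' hii' ih => exact (ih (by omega)).trans (h.2.1 i' j hj (by omega) hi').1

theorem apply_add_le (h : IsGTPattern n L) (m : ℕ) (hj : 1 ≤ j) (hji : j ≤ i)
    (hi : i + m ≤ n) : L (i + m) (j + m) ≤ L i j := by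
  induction m with
  | zero => exact le_rfl
  | succ m ih =>
    exact (h.2.1 (i + m) (j + m) (by omega) (by omega) (by omega)).2.trans (ih (by omega))

end IsGTPattern

namespace MemLambda

theorem apply_le (hL : MemLambda n d L) (i j : ℕ) : L i j ≤ n := by
  by_cases ht : 1 ≤ j ∧ j ≤ i ∧ i ≤ n
  · obtain ⟨hj, hji, hi⟩ := ht
    refine (hL.1.apply_le_apply_of_le hj hji hi le_rfl).trans ?_
    by_cases hjd : j ≤ d
    · rw [hL.2.1 j hj hjd]
    · rw [hL.2.2.1 j (by omega) (by omega)]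
      exact Nat.zero_le n
  · rw [hL.1.2.2 i j ht]
    exact Nat.zero_le n

theorem apply_eq_zero_of_lt (hL : MemLambda n d L) (hdj : d < j) : L i j = 0 := by
  by_cases ht : 1 ≤ j ∧ j ≤ i ∧ i ≤ n
  · obtain ⟨hj, hji, hi⟩ := ht
    have := hL.1.apply_le_apply_of_le hj hji hi le_rfl
    rwa [hL.2.2.1 j hdj (by omega), Nat.le_zero] at this
  · exact hL.1.2.2 i j ht

theorem apply_eq_of_add_le (hL : MemLambda n d L) (hj : 1 ≤ j) (hji : j ≤ i) (hi : i ≤ n)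
    (hjd : j + n ≤ d + i) : L i j = n := by
  refine le_antisymm (hL.apply_le i j) ?_
  have := hL.1.apply_add_le (n - i) hj hji (by omega)
  rwa [Nat.add_sub_cancel' hi, hL.2.1 (j + (n - i)) (by omega) (by omega)] at this

theorem gtRowSum_eq (hL : MemLambda n d L) (hi : i ≤ n) : gtRowSum L i = d * i := by
  rcases Nat.eq_zero_or_pos i with rfl | hi0
  · simp [gtRowSum]
  · exact hL.2.2.2 i hi0 hi

end MemLambda

theorem naimarkMap_of_not_mem (ht : ¬(1 ≤ j ∧ j ≤ i ∧ i ≤ n)) :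
    naimarkMap n d L i j = 0 :=
  if_neg ht

theorem naimarkMap_of_sub_lt (hj : n - d < j) : naimarkMap n d L i j = 0 := by
  unfold naimarkMap
  split_ifs <;> rfl

theorem naimarkMap_of_add_le (hj : 1 ≤ j) (hjd : j ≤ n - d) (hi : d + j ≤ i) (hin : i ≤ n) :
    naimarkMap n d L i j = n := by
  unfold naimarkMap
  rw [if_pos (by omega), if_neg (by omega), if_pos (by omega)]

theorem naimarkMap_of_lt_add (hj : 1 ≤ j) (hji : j ≤ i) (hin : i ≤ n) (hjd : j ≤ n - d)
    (hi : i < d + j) : naimarkMap n d L i j = L (n - i) (d + j - i) := by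
  unfold naimarkMap
  rw [if_pos (by omega), if_neg (by omega), if_neg (by omega)]

theorem naimarkMap_le (hL : ∀ i j, L i j ≤ n) (i j : ℕ) : naimarkMap n d L i j ≤ n := by
  unfold naimarkMap
  split_ifs
  exacts [Nat.zero_le n, le_rfl, hL _ _, Nat.zero_le n]

section Interlacing

variable (hL : IsGTPattern n L) (hle : ∀ i j, L i j ≤ n)
include hL hle

theorem naimarkMap_apply_succ_le (hj : 1 ≤ j) (hji : j + 1 ≤ i) (hi : i ≤ n) :
    naimarkMap n d L i (j + 1) ≤ naimarkMap n d L i j := by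
  by_cases hjd : n - d < j + 1
  · rw [naimarkMap_of_sub_lt hjd]
    exact Nat.zero_le _
  by_cases hdi : d + j ≤ i
  · rw [naimarkMap_of_add_le hj (by omega) hdi hi]
    exact naimarkMap_le hle i (j + 1)
  rw [naimarkMap_of_lt_add hj (by omega) hi (by omega) (by omega),
    naimarkMap_of_lt_add (by omega) hji hi (by omega) (by omega)]
  have := hL.1 (n - i) (d + j - i) (by omega) (by omega) (by omega)
  rwa [show d + j - i + 1 = d + (j + 1) - i by omega] at this

theorem naimarkMap_le_apply_succ (hj : 1 ≤ j) (hji : j ≤ i) (hi : i + 1 ≤ n) :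
    naimarkMap n d L i j ≤ naimarkMap n d L (i + 1) j := by
  by_cases hjd : n - d < j
  · rw [naimarkMap_of_sub_lt hjd]
    exact Nat.zero_le _
  by_cases hdi : d + j ≤ i + 1
  · rw [naimarkMap_of_add_le hj (by omega) hdi hi]
    exact naimarkMap_le hle i j
  rw [naimarkMap_of_lt_add hj hji (by omega) (by omega) (by omega),
    naimarkMap_of_lt_add hj (by omega) hi (by omega) (by omega)]
  have := (hL.2.1 (n - (i + 1)) (d + j - (i + 1)) (by omega) (by omega) (by omega)).2
  rwa [show n - (i + 1) + 1 = n - i by omega, show d + j - (i + 1) + 1 = d + j - i by omega]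
    at this

theorem naimarkMap_apply_succ_succ_le (hj : 1 ≤ j) (hji : j ≤ i) (hi : i + 1 ≤ n) :
    naimarkMap n d L (i + 1) (j + 1) ≤ naimarkMap n d L i j := by
  by_cases hjd : n - d < j + 1
  · rw [naimarkMap_of_sub_lt hjd]
    exact Nat.zero_le _
  by_cases hdi : d + j ≤ i
  · rw [naimarkMap_of_add_le hj (by omega) hdi (by omega)]
    exact naimarkMap_le hle (i + 1) (j + 1)
  rw [naimarkMap_of_lt_add hj hji (by omega) (by omega) (by omega),
    naimarkMap_of_lt_add (by omega) (by omega) hi (by omega) (by omega)]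
  have := (hL.2.1 (n - (i + 1)) (d + j - i) (by omega) (by omega) (by omega)).1
  rw [show n - (i + 1) + 1 = n - i by omega] at this
  rwa [show d + (j + 1) - (i + 1) = d + j - i by omega]

theorem isGTPattern_naimarkMap : IsGTPattern n (naimarkMap n d L) :=
  ⟨fun _ _ hj hji hi => naimarkMap_apply_succ_le hL hle hj hji hi,
    fun _ _ hj hji hi =>
      ⟨naimarkMap_le_apply_succ hL hle hj hji hi, naimarkMap_apply_succ_succ_le hL hle hj hji hi⟩,
    fun _ _ => naimarkMap_of_not_mem⟩

end Interlacing

theorem sum_naimarkMap_eq_sum_row (hi : i ≤ n) :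
    ∑ j ∈ Ioc (i - d) (min i (n - d)), naimarkMap n d L i j =
      ∑ k ∈ Ioc (d - i) (min d (n - i)), L (n - i) k := by
  refine sum_nbij' (fun j => d + j - i) (fun k => i + k - d) ?_ ?_ ?_ ?_ ?_ <;>
    intro j hj <;> simp only [mem_Ioc] at hj ⊢
  · omega
  · omega
  · omega
  · omega
  · exact naimarkMap_of_lt_add (by omega) (by omega) hi (by omega) (by omega)

theorem gtRowSum_eq_sum_Ioc (L : ℕ → ℕ → ℕ) (i : ℕ) :
    gtRowSum L i = ∑ j ∈ Ioc 0 i, L i j := by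
  rw [gtRowSum, ← Icc_add_one_left_eq_Ioc, zero_add]

theorem gtRowSum_naimarkMap (hd : d ≤ n) (hL : MemLambda n d L) (hi : i ≤ n) :
    gtRowSum (naimarkMap n d L) i = (n - d) * i := by
  have hN : gtRowSum (naimarkMap n d L) i =
      (i - d) * n + ∑ j ∈ Ioc (i - d) (min i (n - d)), naimarkMap n d L i j := by
    rw [gtRowSum_eq_sum_Ioc, ← smul_eq_mul]
    exact sum_Ioc_eq_nsmul_add_sum_Ioc _ (by omega) (min_le_left _ _)
      (fun j hj hji => naimarkMap_of_add_le hj (by omega) (by omega) hi)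
      (fun j hj _ => naimarkMap_of_sub_lt (by omega))
  have hL' : (d - i) * n + ∑ k ∈ Ioc (d - i) (min d (n - i)), L (n - i) k = d * (n - i) := by
    rw [← hL.gtRowSum_eq (Nat.sub_le n i), gtRowSum_eq_sum_Ioc, ← smul_eq_mul]
    exact (sum_Ioc_eq_nsmul_add_sum_Ioc _ (by omega) (min_le_right _ _)
      (fun j hj hjd => hL.apply_eq_of_add_le hj (by omega) (by omega) (by omega))
      (fun j hj _ => hL.apply_eq_zero_of_lt (by omega))).symm
  rw [hN, sum_naimarkMap_eq_sum_row hi]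
  generalize ∑ k ∈ Ioc (d - i) (min d (n - i)), L (n - i) k = S at hL' ⊢
  rcases le_total i d with h | h
  · rw [Nat.sub_eq_zero_of_le h]
    zify [h, hi, hd] at hL' ⊢
    linear_combination hL'
  · rw [Nat.sub_eq_zero_of_le h] at hL'
    zify [h, hi, hd] at hL' ⊢
    linear_combination hL'

theorem memLambda_naimarkMap (hd : d ≤ n) (hL : MemLambda n d L) :
    MemLambda n (n - d) (naimarkMap n d L) :=
  ⟨isGTPattern_naimarkMap hL.1 hL.apply_le,
    fun j hj hjd => naimarkMap_of_add_le hj hjd (by omega) le_rfl,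
    fun j hjd _ => naimarkMap_of_sub_lt hjd,
    fun i _ hi => gtRowSum_naimarkMap hd hL hi⟩

theorem naimarkMap_naimarkMap (hd : d ≤ n) (hL : MemLambda n d L) :
    naimarkMap n (n - d) (naimarkMap n d L) = L := by
  funext i j
  by_cases ht : 1 ≤ j ∧ j ≤ i ∧ i ≤ n
  · obtain ⟨hj, hji, hi⟩ := ht
    by_cases hdj : d < j
    · rw [naimarkMap_of_sub_lt (by omega), hL.apply_eq_zero_of_lt hdj]
    by_cases hdi : n - d + j ≤ i
    · rw [naimarkMap_of_add_le hj (by omega) hdi hi, hL.apply_eq_of_add_le hj hji hi (by omega)]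
    rw [naimarkMap_of_lt_add hj hji hi (by omega) (by omega),
      naimarkMap_of_lt_add (by omega) (by omega) (by omega) (by omega) (by omega),
      show n - (n - i) = i by omega, show d + (n - d + j - i) - (n - i) = j by omega]
  · rw [naimarkMap_of_not_mem ht, hL.1.2.2 i j ht]

/-- The Naimark map sends `Λ_{n,d}` to `Λ_{n,n-d}`, and `N_{n,n-d} ∘ N_{n,d}` is the
identity. -/
theorem naimark_map_iso (n d : ℕ) (hd : d < n) (L : ℕ → ℕ → ℕ) (hL : MemLambda n d L) :
    MemLambda n (n - d) (naimarkMap n d L) ∧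
    naimarkMap n (n - d) (naimarkMap n d L) = L :=
  ⟨memLambda_naimarkMap hd.le hL, naimarkMap_naimarkMap hd.le hL⟩
end

section
/- Let T be an SSYT of rectangular shape d×n (d rows of length n) with entries in {1,…,n} and constant content (each value appears exactly d times). Define γ(T) by: replace each entry j by n+1−j in place, then replace each column by the complement of its entry set in {1,…,n}, sorted increasingly. Then γ(T) is an SSYT of rectangular shape (n−d)×n with constant content (each value appears n−d times), and γ is an involution (γ(γ(T)) = T). -/
open Finset

section Helpers

lemma filter_le_nth {s : Finset ℕ} {m : ℕ} (h : s.card = m) (i : Fin m) :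
    (s.filter (· ≤ s.orderEmbOfFin h i)).card = i + 1 := by
  have : s.filter (· ≤ s.orderEmbOfFin h i)
      = (Finset.univ.filter (fun j : Fin m => j ≤ i)).image (s.orderEmbOfFin h) := by
    ext x
    simp only [mem_filter, mem_image, mem_univ, true_and]
    constructor
    · rintro ⟨hxs, hxle⟩
      obtain ⟨j, rfl⟩ : ∃ j, s.orderEmbOfFin h j = x := by
        have hx : x ∈ Set.range (s.orderEmbOfFin h) := by
          rw [Finset.range_orderEmbOfFin s h]; exact hxs
        exact hx
      exact ⟨j, (OrderEmbedding.le_iff_le _).mp hxle, rfl⟩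
    · rintro ⟨j, hji, rfl⟩
      exact ⟨Finset.orderEmbOfFin_mem s h j, (OrderEmbedding.le_iff_le _).mpr hji⟩
  rw [this, Finset.card_image_of_injective _ (s.orderEmbOfFin h).injective]
  have : Finset.univ.filter (fun j : Fin m => j ≤ i) = Finset.Iic i := by
    ext j; simp
  rw [this, Fin.card_Iic]

lemma filter_le_card_le {s : Finset ℕ} {m : ℕ} (h : s.card = m) (i : Fin m) {t : ℕ}
    (ht : t < s.orderEmbOfFin h i) : (s.filter (· ≤ t)).card ≤ i := by
  have hsub : s.filter (· ≤ t)
      ⊆ (Finset.univ.filter (fun j : Fin m => j < i)).image (s.orderEmbOfFin h) := by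
    intro x hx
    rw [mem_filter] at hx
    obtain ⟨j, rfl⟩ : ∃ j, s.orderEmbOfFin h j = x := by
      have hx' : x ∈ Set.range (s.orderEmbOfFin h) := by
        rw [Finset.range_orderEmbOfFin s h]; exact hx.1
      exact hx'
    simp only [mem_image, mem_univ, mem_filter, true_and]
    refine ⟨j, ?_, rfl⟩
    exact (OrderEmbedding.lt_iff_lt _).mp (lt_of_le_of_lt hx.2 ht)
  calc (s.filter (· ≤ t)).card ≤ _ := Finset.card_le_card hsub
    _ ≤ (Finset.univ.filter (fun j : Fin m => j < i)).card := Finset.card_image_le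
    _ = i := by
        have : Finset.univ.filter (fun j : Fin m => j < i) = Finset.Iio i := by ext j; simp
        rw [this, Fin.card_Iio]

lemma nth_le_nth {s s' : Finset ℕ} {m : ℕ} (hs : s.card = m) (hs' : s'.card = m)
    (hc : ∀ t, (s.filter (· ≤ t)).card ≤ (s'.filter (· ≤ t)).card) (i : Fin m) :
    s'.orderEmbOfFin hs' i ≤ s.orderEmbOfFin hs i := by
  by_contra hlt
  push_neg at hlt
  have h1 := filter_le_nth hs i
  have h2 := filter_le_card_le hs' i hlt
  have := hc (s.orderEmbOfFin hs i)
  omega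

lemma lt_of_adj {f : ℕ → ℕ} {a b : ℕ} (h : ∀ r, a ≤ r → r + 1 ≤ b → f r < f (r + 1)) :
    ∀ r r', a ≤ r → r < r' → r' ≤ b → f r < f r' := by
  intro r r' har hrr hr'b
  induction r' with
  | zero => omega
  | succ q ih =>
    rcases Nat.lt_or_ge r q with h1 | h1
    · exact (ih (by omega) (by omega)).trans (h q (by omega) (by omega))
    · have : r = q := by omega
      subst this; exact h r har hr'b

open Classical in
lemma sum_indicator_eq {q v : ℕ} {f : ℕ → ℕ} (hinj : Set.InjOn f (Finset.Icc 1 q)) :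
    (∑ r ∈ Finset.Icc 1 q, if f r = v then 1 else 0)
      = if ∃ r, 1 ≤ r ∧ r ≤ q ∧ f r = v then 1 else 0 := by
  split_ifs with h
  · obtain ⟨r0, h1, h2, h3⟩ := h
    have : (Finset.Icc 1 q).filter (fun r => f r = v) = {r0} := by
      ext x
      simp only [mem_filter, mem_Icc, mem_singleton]
      constructor
      · rintro ⟨⟨hx1, hx2⟩, hfx⟩
        exact hinj (by simp [mem_Icc]; omega) (by simp [mem_Icc]; omega) (by rw [hfx, h3])
      · rintro rfl; exact ⟨⟨h1, h2⟩, h3⟩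
    rw [Finset.sum_boole, this]
    simp
  · rw [Finset.sum_boole]
    have : (Finset.Icc 1 q).filter (fun r => f r = v) = ∅ := by
      ext x
      simp only [mem_filter, mem_Icc, notMem_empty, iff_false, not_and]
      rintro ⟨hx1, hx2⟩ hfx
      exact h ⟨x, hx1, hx2, hfx⟩
    rw [this]; simp

end Helpers

/-- `T` is a semistandard skew Young tableau of shape `lam / mu` with at most `m` rows,
entries in `{1, …, n}`, and content `w`, encoded as a doubly-indexed family,
zero outside the skew shape. -/
def IsSkewSSYT (m n : ℕ) (lam mu w : ℕ → ℕ) (T : ℕ → ℕ → ℕ) : Prop :=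
  (∀ r c, 1 ≤ r → mu r < c → c ≤ lam r → 1 ≤ T r c ∧ T r c ≤ n) ∧
  (∀ r c, 1 ≤ r → mu r < c → c + 1 ≤ lam r → T r c ≤ T r (c + 1)) ∧
  (∀ r c, 1 ≤ r → mu r < c → c ≤ lam r → mu (r + 1) < c → c ≤ lam (r + 1) →
    T r c < T (r + 1) c) ∧
  (∀ r c, ¬(1 ≤ r ∧ mu r < c ∧ c ≤ lam r) → T r c = 0) ∧
  (∀ k, 1 ≤ k → k ≤ n →
    (∑ r ∈ Finset.Icc 1 m, ∑ c ∈ Finset.Icc 1 (lam r), if T r c = k then 1 else 0) = w k)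

/-- `T` is a rectangular `d × n` SSYT with entries in `{1,…,n}` and constant content:
each value of `{1,…,n}` appears exactly `d` times. -/
def IsRectSSYT (d n : ℕ) (T : ℕ → ℕ → ℕ) : Prop :=
  IsSkewSSYT d n (fun r => if 1 ≤ r ∧ r ≤ d then n else 0) (fun _ => 0) (fun _ => d) T

/-- `S` and `T` are related by the complementation rule defining `γ`: for each column `c`,
the entry set of column `c` of `S` is the complement in `{1,…,n}` of the set
`{n + 1 - j : j in column c of T}`. -/
def GammaColRule (n d d' : ℕ) (T S : ℕ → ℕ → ℕ) : Prop :=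
  ∀ c k, 1 ≤ c → c ≤ n → 1 ≤ k → k ≤ n →
    ((∃ r, 1 ≤ r ∧ r ≤ d' ∧ S r c = k) ↔ ¬ ∃ r, 1 ≤ r ∧ r ≤ d ∧ T r c = n + 1 - k)

section RectFacts

variable {d n : ℕ} {T : ℕ → ℕ → ℕ}

lemma rect_bounds (hT : IsRectSSYT d n T) {r c : ℕ} (h1 : 1 ≤ r) (h2 : r ≤ d)
    (h3 : 1 ≤ c) (h4 : c ≤ n) : 1 ≤ T r c ∧ T r c ≤ n := by
  refine hT.1 r c h1 h3 ?_
  simp only [if_pos (⟨h1, h2⟩ : 1 ≤ r ∧ r ≤ d)]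
  exact h4

lemma rect_row (hT : IsRectSSYT d n T) {r c : ℕ} (h1 : 1 ≤ r) (h2 : r ≤ d)
    (h3 : 1 ≤ c) (h4 : c + 1 ≤ n) : T r c ≤ T r (c + 1) := by
  refine hT.2.1 r c h1 h3 ?_
  simp only [if_pos (⟨h1, h2⟩ : 1 ≤ r ∧ r ≤ d)]
  exact h4

lemma rect_col (hT : IsRectSSYT d n T) {r c : ℕ} (h1 : 1 ≤ r) (h2 : r + 1 ≤ d)
    (h3 : 1 ≤ c) (h4 : c ≤ n) : T r c < T (r + 1) c := by
  refine hT.2.2.1 r c h1 h3 ?_ h3 ?_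
  · simp only [if_pos (⟨h1, by omega⟩ : 1 ≤ r ∧ r ≤ d)]; exact h4
  · simp only [if_pos (⟨by omega, h2⟩ : 1 ≤ r + 1 ∧ r + 1 ≤ d)]; exact h4

lemma rect_strict (hT : IsRectSSYT d n T) {c : ℕ} (h3 : 1 ≤ c) (h4 : c ≤ n) :
    ∀ r r', 1 ≤ r → r < r' → r' ≤ d → T r c < T r' c :=
  lt_of_adj (fun r hr hr' => rect_col hT hr hr' h3 h4)

lemma rect_injOn (hT : IsRectSSYT d n T) {c : ℕ} (h3 : 1 ≤ c) (h4 : c ≤ n) :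
    Set.InjOn (fun r => T r c) (Finset.Icc 1 d) := by
  intro x hx y hy hxy
  simp only [coe_Icc, Set.mem_Icc] at hx hy
  by_contra hne
  rcases Nat.lt_or_ge x y with h | h
  · exact absurd hxy (Nat.ne_of_lt (rect_strict hT h3 h4 x y hx.1 h hy.2))
  · have h' : y < x := by omega
    exact absurd hxy.symm (Nat.ne_of_lt (rect_strict hT h3 h4 y x hy.1 h' hx.2))

lemma rect_zero (hT : IsRectSSYT d n T) {r c : ℕ}
    (h : ¬(1 ≤ r ∧ r ≤ d ∧ 1 ≤ c ∧ c ≤ n)) : T r c = 0 := by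
  apply hT.2.2.2.1
  rintro ⟨h1, h2, h3⟩
  simp only [] at h2 h3
  split_ifs at h3 with h4
  · exact h ⟨h1, h4.2, h2, h3⟩
  · omega

lemma rect_content (hT : IsRectSSYT d n T) {k : ℕ} (h1 : 1 ≤ k) (h2 : k ≤ n) :
    (∑ r ∈ Finset.Icc 1 d, ∑ c ∈ Finset.Icc 1 n, if T r c = k then 1 else 0) = d := by
  have h := hT.2.2.2.2 k h1 h2
  simp only [] at h
  have heq : (∑ r ∈ Finset.Icc 1 d, ∑ c ∈ Finset.Icc 1 n, if T r c = k then 1 else 0)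
      = ∑ r ∈ Finset.Icc 1 d, ∑ c ∈ Finset.Icc 1 (if 1 ≤ r ∧ r ≤ d then n else 0),
          if T r c = k then 1 else 0 := by
    refine Finset.sum_congr rfl (fun r hr => ?_)
    rw [mem_Icc] at hr
    rw [if_pos (⟨hr.1, hr.2⟩ : 1 ≤ r ∧ r ≤ d)]
  rw [heq, h]

open Classical in
lemma rect_colcount (hT : IsRectSSYT d n T) {v : ℕ} (h1 : 1 ≤ v) (h2 : v ≤ n) :
    ((Finset.Icc 1 n).filter (fun c => ∃ r, 1 ≤ r ∧ r ≤ d ∧ T r c = v)).card = d := by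
  have hcont := rect_content hT h1 h2
  rw [Finset.sum_comm] at hcont
  have : ∀ c ∈ Finset.Icc 1 n,
      (∑ r ∈ Finset.Icc 1 d, if T r c = v then 1 else 0)
        = if ∃ r, 1 ≤ r ∧ r ≤ d ∧ T r c = v then 1 else 0 := by
    intro c hc
    rw [mem_Icc] at hc
    exact sum_indicator_eq (rect_injOn hT hc.1 hc.2)
  rw [Finset.sum_congr rfl this, Finset.sum_boole, Nat.cast_id] at hcont
  exact hcont

end RectFacts

section Cols

/-- The set `{n+1-j : j in column c of T}`. -/
def colT (n d : ℕ) (T : ℕ → ℕ → ℕ) (c : ℕ) : Finset ℕ :=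
  (Finset.Icc 1 d).image (fun r => n + 1 - T r c)

/-- The complement of `colT` in `{1,…,n}`. -/
def colS (n d : ℕ) (T : ℕ → ℕ → ℕ) (c : ℕ) : Finset ℕ :=
  Finset.Icc 1 n \ colT n d T c

variable {d n : ℕ} {T : ℕ → ℕ → ℕ}

lemma colT_subset (hT : IsRectSSYT d n T) {c : ℕ} (h3 : 1 ≤ c) (h4 : c ≤ n) :
    colT n d T c ⊆ Finset.Icc 1 n := by
  intro x hx
  simp only [colT, mem_image, mem_Icc] at hx
  obtain ⟨r, hr, rfl⟩ := hx
  have := rect_bounds hT hr.1 hr.2 h3 h4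
  rw [mem_Icc]; omega

lemma colT_card (hT : IsRectSSYT d n T) {c : ℕ} (h3 : 1 ≤ c) (h4 : c ≤ n) :
    (colT n d T c).card = d := by
  rw [colT, Finset.card_image_of_injOn, Nat.card_Icc]
  · omega
  · intro x hx y hy hxy
    simp only [coe_Icc, Set.mem_Icc] at hx hy
    have hbx := rect_bounds hT hx.1 hx.2 h3 h4
    have hby := rect_bounds hT hy.1 hy.2 h3 h4
    have : T x c = T y c := by simp only [] at hxy; omega
    exact rect_injOn hT h3 h4 (by simp [Set.mem_Icc]; omega) (by simp [Set.mem_Icc]; omega) this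

lemma colS_card (hT : IsRectSSYT d n T) (hd : d ≤ n) {c : ℕ} (h3 : 1 ≤ c) (h4 : c ≤ n) :
    (colS n d T c).card = n - d := by
  rw [colS, Finset.card_sdiff_of_subset (colT_subset hT h3 h4), colT_card hT h3 h4, Nat.card_Icc]
  omega

lemma colT_mem_iff (hT : IsRectSSYT d n T) {c k : ℕ} (h3 : 1 ≤ c) (h4 : c ≤ n)
    (hk1 : 1 ≤ k) (hk2 : k ≤ n) :
    k ∈ colT n d T c ↔ ∃ r, 1 ≤ r ∧ r ≤ d ∧ T r c = n + 1 - k := by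
  simp only [colT, mem_image, mem_Icc]
  constructor
  · rintro ⟨r, hr, hrk⟩
    have := rect_bounds hT hr.1 hr.2 h3 h4
    exact ⟨r, hr.1, hr.2, by omega⟩
  · rintro ⟨r, hr1, hr2, hrk⟩
    have := rect_bounds hT hr1 hr2 h3 h4
    exact ⟨r, ⟨hr1, hr2⟩, by omega⟩

open Classical in
lemma colT_count (hT : IsRectSSYT d n T) {c t : ℕ} (h3 : 1 ≤ c) (h4 : c ≤ n) :
    ((colT n d T c).filter (· ≤ t)).card
      = ((Finset.Icc 1 d).filter (fun r => n + 1 - t ≤ T r c)).card := by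
  have himg : (colT n d T c).filter (· ≤ t)
      = ((Finset.Icc 1 d).filter (fun r => n + 1 - t ≤ T r c)).image
          (fun r => n + 1 - T r c) := by
    ext x
    simp only [colT, mem_filter, mem_image, mem_Icc]
    constructor
    · rintro ⟨⟨r, hr, rfl⟩, hxt⟩
      have := rect_bounds hT hr.1 hr.2 h3 h4
      exact ⟨r, ⟨hr, by omega⟩, rfl⟩
    · rintro ⟨r, ⟨hr, hrt⟩, rfl⟩
      have := rect_bounds hT hr.1 hr.2 h3 h4
      exact ⟨⟨r, hr, rfl⟩, by omega⟩
  rw [himg, Finset.card_image_of_injOn]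
  intro x hx y hy hxy
  simp only [coe_filter, Set.mem_setOf_eq, mem_Icc] at hx hy
  have hbx := rect_bounds hT hx.1.1 hx.1.2 h3 h4
  have hby := rect_bounds hT hy.1.1 hy.1.2 h3 h4
  have : T x c = T y c := by simp only [] at hxy; omega
  exact rect_injOn hT h3 h4 (by simp [Set.mem_Icc]; omega) (by simp [Set.mem_Icc]; omega) this

open Classical in
lemma colT_count_mono (hT : IsRectSSYT d n T) {c t : ℕ} (h3 : 1 ≤ c) (h4 : c + 1 ≤ n) :
    ((colT n d T c).filter (· ≤ t)).card ≤ ((colT n d T (c + 1)).filter (· ≤ t)).card := by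
  rw [colT_count hT h3 (by omega), colT_count hT (by omega) h4]
  apply Finset.card_le_card
  intro r hr
  simp only [mem_filter, mem_Icc] at hr ⊢
  exact ⟨hr.1, le_trans hr.2 (rect_row hT hr.1.1 hr.1.2 h3 h4)⟩

lemma colS_count (hT : IsRectSSYT d n T) {c t : ℕ} (h3 : 1 ≤ c) (h4 : c ≤ n) :
    ((colS n d T c).filter (· ≤ t)).card
      = ((Finset.Icc 1 n).filter (· ≤ t)).card - ((colT n d T c).filter (· ≤ t)).card := by
  have hsd : (colS n d T c).filter (· ≤ t)
      = (Finset.Icc 1 n).filter (· ≤ t) \ (colT n d T c).filter (· ≤ t) := by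
    ext x
    simp only [colS, mem_filter, mem_sdiff]
    tauto
  rw [hsd, Finset.card_sdiff_of_subset]
  exact Finset.filter_subset_filter _ (colT_subset hT h3 h4)

lemma colS_count_mono (hT : IsRectSSYT d n T) {c t : ℕ} (h3 : 1 ≤ c) (h4 : c + 1 ≤ n) :
    ((colS n d T (c + 1)).filter (· ≤ t)).card ≤ ((colS n d T c).filter (· ≤ t)).card := by
  rw [colS_count hT h3 (by omega), colS_count hT (by omega) h4]
  exact Nat.sub_le_sub_left (colT_count_mono hT h3 h4) _

end Cols

/-- The filling `γ(T)`: column `c` is the increasing enumeration of `colS n d T c`. -/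
def gammaS (n d : ℕ) (T : ℕ → ℕ → ℕ) (r c : ℕ) : ℕ :=
  if h : 1 ≤ r ∧ r ≤ n - d ∧ 1 ≤ c ∧ c ≤ n ∧ (colS n d T c).card = n - d then
    (colS n d T c).orderEmbOfFin h.2.2.2.2 ⟨r - 1, by omega⟩ else 0

section GammaS

variable {d n : ℕ} {T : ℕ → ℕ → ℕ}

lemma gammaS_val (hT : IsRectSSYT d n T) (hd : d ≤ n) {r c : ℕ}
    (h1 : 1 ≤ r) (h2 : r ≤ n - d) (h3 : 1 ≤ c) (h4 : c ≤ n) :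
    gammaS n d T r c
      = (colS n d T c).orderEmbOfFin (colS_card hT hd h3 h4) ⟨r - 1, by omega⟩ := by
  rw [gammaS, dif_pos ⟨h1, h2, h3, h4, colS_card hT hd h3 h4⟩]

lemma gammaS_mem (hT : IsRectSSYT d n T) (hd : d ≤ n) {r c : ℕ}
    (h1 : 1 ≤ r) (h2 : r ≤ n - d) (h3 : 1 ≤ c) (h4 : c ≤ n) :
    gammaS n d T r c ∈ colS n d T c := by
  rw [gammaS_val hT hd h1 h2 h3 h4]
  exact Finset.orderEmbOfFin_mem _ _ _

lemma gammaS_surj (hT : IsRectSSYT d n T) (hd : d ≤ n) {c k : ℕ}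
    (h3 : 1 ≤ c) (h4 : c ≤ n) (hk : k ∈ colS n d T c) :
    ∃ r, 1 ≤ r ∧ r ≤ n - d ∧ gammaS n d T r c = k := by
  have hk' : k ∈ Set.range ((colS n d T c).orderEmbOfFin (colS_card hT hd h3 h4)) := by
    rw [Finset.range_orderEmbOfFin]; exact hk
  obtain ⟨i, hi⟩ := hk'
  refine ⟨i + 1, by omega, by omega, ?_⟩
  rw [gammaS_val hT hd (by omega) (by omega) h3 h4]
  have heq : (⟨i + 1 - 1, by omega⟩ : Fin (n - d)) = i := by ext; simp
  rw [heq]; exact hi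

lemma gammaS_strict (hT : IsRectSSYT d n T) (hd : d ≤ n) {r r' c : ℕ}
    (h1 : 1 ≤ r) (h2 : r < r') (h2' : r' ≤ n - d) (h3 : 1 ≤ c) (h4 : c ≤ n) :
    gammaS n d T r c < gammaS n d T r' c := by
  rw [gammaS_val hT hd h1 (by omega) h3 h4, gammaS_val hT hd (by omega) h2' h3 h4]
  exact ((colS n d T c).orderEmbOfFin _).strictMono (by simp [Fin.mk_lt_mk]; omega)

lemma gammaS_injOn (hT : IsRectSSYT d n T) (hd : d ≤ n) {c : ℕ}
    (h3 : 1 ≤ c) (h4 : c ≤ n) :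
    Set.InjOn (fun r => gammaS n d T r c) (Finset.Icc 1 (n - d)) := by
  intro x hx y hy hxy
  simp only [coe_Icc, Set.mem_Icc] at hx hy
  by_contra hne
  rcases Nat.lt_or_ge x y with h | h
  · exact absurd hxy (Nat.ne_of_lt (gammaS_strict hT hd hx.1 h hy.2 h3 h4))
  · have h' : y < x := by omega
    exact absurd hxy.symm (Nat.ne_of_lt (gammaS_strict hT hd hy.1 h' hx.2 h3 h4))

end GammaS

section Main

variable {d n : ℕ} {T : ℕ → ℕ → ℕ}

lemma gammaS_rule (hT : IsRectSSYT d n T) (hd : d ≤ n) :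
    GammaColRule n d (n - d) T (gammaS n d T) := by
  intro c k hc1 hc2 hk1 hk2
  rw [← colT_mem_iff hT hc1 hc2 hk1 hk2]
  constructor
  · rintro ⟨r, h1, h2, rfl⟩
    have hm := gammaS_mem hT hd h1 h2 hc1 hc2
    rw [colS, mem_sdiff] at hm
    exact hm.2
  · intro hnot
    refine gammaS_surj hT hd hc1 hc2 ?_
    rw [colS, mem_sdiff, mem_Icc]
    exact ⟨⟨hk1, hk2⟩, hnot⟩

open Classical in
lemma gammaS_rect (hT : IsRectSSYT d n T) (hd : d ≤ n) :
    IsRectSSYT (n - d) n (gammaS n d T) := by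
  refine ⟨?_, ?_, ?_, ?_, ?_⟩
  · -- bounds
    intro r c hr1 hc hle
    simp only [] at hc hle
    have hrm : r ≤ n - d ∧ c ≤ n := by
      split_ifs at hle with h
      · exact ⟨h.2, hle⟩
      · omega
    have hm := gammaS_mem hT hd hr1 hrm.1 hc hrm.2
    rw [colS, mem_sdiff, mem_Icc] at hm
    exact hm.1
  · -- rows weakly increase
    intro r c hr1 hc hle
    simp only [] at hc hle
    have hrm : r ≤ n - d ∧ c + 1 ≤ n := by
      split_ifs at hle with h
      · exact ⟨h.2, hle⟩
      · omega
    rw [gammaS_val hT hd hr1 hrm.1 hc (by omega),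
        gammaS_val hT hd hr1 hrm.1 (by omega) hrm.2]
    exact nth_le_nth _ _ (fun t => colS_count_mono hT hc hrm.2) ⟨r - 1, by omega⟩
  · -- columns strictly increase
    intro r c hr1 hc hle hc' hle'
    simp only [] at hc hle hle'
    have hrm : r + 1 ≤ n - d ∧ c ≤ n := by
      split_ifs at hle' with h
      · exact ⟨h.2, hle'⟩
      · omega
    exact gammaS_strict hT hd hr1 (by omega) hrm.1 hc hrm.2
  · -- zero outside
    intro r c hnot
    rw [gammaS, dif_neg]
    rintro ⟨h1, h2, h3, h4, h5⟩
    refine hnot ⟨h1, h3, ?_⟩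
    simp only [if_pos (⟨h1, h2⟩ : 1 ≤ r ∧ r ≤ n - d)]
    exact h4
  · -- content
    intro k hk1 hk2
    simp only []
    have hstep1 : (∑ r ∈ Finset.Icc 1 (n - d),
        ∑ c ∈ Finset.Icc 1 (if 1 ≤ r ∧ r ≤ n - d then n else 0),
          if gammaS n d T r c = k then 1 else 0)
        = ∑ c ∈ Finset.Icc 1 n, ∑ r ∈ Finset.Icc 1 (n - d),
            if gammaS n d T r c = k then 1 else 0 := by
      rw [← Finset.sum_comm]
      refine Finset.sum_congr rfl (fun r hr => ?_)
      rw [mem_Icc] at hr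
      rw [if_pos (⟨hr.1, hr.2⟩ : 1 ≤ r ∧ r ≤ n - d)]
    rw [hstep1]
    have hstep2 : ∀ c ∈ Finset.Icc 1 n,
        (∑ r ∈ Finset.Icc 1 (n - d), if gammaS n d T r c = k then 1 else 0)
          = if k ∈ colS n d T c then 1 else 0 := by
      intro c hc
      rw [mem_Icc] at hc
      rw [sum_indicator_eq (gammaS_injOn hT hd hc.1 hc.2)]
      congr 1
      simp only [eq_iff_iff]
      constructor
      · rintro ⟨r, h1, h2, rfl⟩
        exact gammaS_mem hT hd h1 h2 hc.1 hc.2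
      · intro hk
        exact gammaS_surj hT hd hc.1 hc.2 hk
    rw [Finset.sum_congr rfl hstep2, Finset.sum_boole, Nat.cast_id]
    have hstep3 : (Finset.Icc 1 n).filter (fun c => k ∈ colS n d T c)
        = Finset.Icc 1 n \ (Finset.Icc 1 n).filter (fun c => k ∈ colT n d T c) := by
      ext c
      simp only [colS, mem_filter, mem_sdiff, mem_Icc]
      constructor
      · rintro ⟨hc, hm⟩
        exact ⟨hc, fun h => hm.2 h.2⟩
      · rintro ⟨hc, hm⟩
        exact ⟨hc, ⟨hk1, hk2⟩, fun h => hm ⟨hc, h⟩⟩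
    rw [hstep3, Finset.card_sdiff_of_subset (Finset.filter_subset _ _)]
    have hstep4 : (Finset.Icc 1 n).filter (fun c => k ∈ colT n d T c)
        = (Finset.Icc 1 n).filter (fun c => ∃ r, 1 ≤ r ∧ r ≤ d ∧ T r c = n + 1 - k) := by
      refine Finset.filter_congr (fun c hc => ?_)
      rw [mem_Icc] at hc
      exact colT_mem_iff hT hc.1 hc.2 hk1 hk2
    rw [hstep4, rect_colcount hT (by omega) (by omega), Nat.card_Icc]
    omega

end Main

section UniqInv

variable {d n : ℕ}

lemma gamma_unique (hd : d ≤ n) (T S S' : ℕ → ℕ → ℕ) (hT : IsRectSSYT d n T)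
    (hS : IsRectSSYT (n - d) n S) (hS' : IsRectSSYT (n - d) n S')
    (hr : GammaColRule n d (n - d) T S) (hr' : GammaColRule n d (n - d) T S') :
    S = S' := by
  funext r c
  by_cases hin : 1 ≤ r ∧ r ≤ n - d ∧ 1 ≤ c ∧ c ≤ n
  · obtain ⟨h1, h2, h3, h4⟩ := hin
    set m := n - d with hm
    -- the common column set
    set s : Finset ℕ := (Finset.Icc 1 m).image (fun r => S r c) with hs
    have hscard : s.card = m := by
      rw [hs, Finset.card_image_of_injOn, Nat.card_Icc]
      · omega
      · intro x hx y hy hxy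
        simp only [coe_Icc, Set.mem_Icc] at hx hy
        by_contra hne
        rcases Nat.lt_or_ge x y with h | h
        · exact absurd hxy (Nat.ne_of_lt (rect_strict hS h3 h4 x y hx.1 h hy.2))
        · have h' : y < x := by omega
          exact absurd hxy.symm (Nat.ne_of_lt (rect_strict hS h3 h4 y x hy.1 h' hx.2))
    -- membership iff for both
    have hmem : ∀ k, (∃ r, 1 ≤ r ∧ r ≤ m ∧ S' r c = k) → k ∈ s := by
      rintro k ⟨r0, hr0, hr1, rfl⟩
      have hb := rect_bounds hS' hr0 hr1 h3 h4
      have h2' := (hr' c (S' r0 c) h3 h4 hb.1 hb.2).mp ⟨r0, hr0, hr1, rfl⟩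
      obtain ⟨r2, hr2, hr3, hr4⟩ := (hr c (S' r0 c) h3 h4 hb.1 hb.2).mpr h2'
      rw [hs, mem_image]
      exact ⟨r2, by rw [mem_Icc]; exact ⟨hr2, hr3⟩, hr4⟩
    -- f and f' : Fin m → ℕ
    have hfS : (fun i : Fin m => S (i + 1) c) = s.orderEmbOfFin hscard := by
      apply Finset.orderEmbOfFin_unique
      · intro i
        rw [hs, mem_image]
        exact ⟨i + 1, by rw [mem_Icc]; omega, rfl⟩
      · intro i j hij
        exact rect_strict hS h3 h4 (i + 1) (j + 1) (by omega)
          (by simp only [Fin.lt_def] at hij; omega) (by omega)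
    have hfS' : (fun i : Fin m => S' (i + 1) c) = s.orderEmbOfFin hscard := by
      apply Finset.orderEmbOfFin_unique
      · intro i
        exact hmem _ ⟨i + 1, by omega, by omega, rfl⟩
      · intro i j hij
        exact rect_strict hS' h3 h4 (i + 1) (j + 1) (by omega)
          (by simp only [Fin.lt_def] at hij; omega) (by omega)
    have heq : S ((⟨r - 1, by omega⟩ : Fin m).val + 1) c
        = S' ((⟨r - 1, by omega⟩ : Fin m).val + 1) c := by
      rw [congrFun hfS ⟨r - 1, by omega⟩, congrFun hfS' ⟨r - 1, by omega⟩]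
    simpa [Nat.sub_add_cancel h1] using heq
  · rw [rect_zero hS hin, rect_zero hS' hin]

lemma gamma_inv (hd : d ≤ n) (T S : ℕ → ℕ → ℕ) (hT : IsRectSSYT d n T)
    (hS : IsRectSSYT (n - d) n S) (hr : GammaColRule n d (n - d) T S) :
    GammaColRule n (n - d) d S T := by
  intro c k hc1 hc2 hk1 hk2
  have h1 := hr c (n + 1 - k) hc1 hc2 (by omega) (by omega)
  rw [show n + 1 - (n + 1 - k) = k by omega] at h1
  constructor
  · intro hex hSex
    exact (h1.mp hSex) hex
  · intro hnot
    by_contra hne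
    exact hnot (h1.mpr hne)

end UniqInv

/-- The complementation map `γ` sends a rectangular `d × n` SSYT with constant content to a
rectangular `(n-d) × n` SSYT with constant content; it is well defined (the image filling is
unique) and is an involution: applying the same rule to `γ(T)` recovers `T`. -/
theorem gamma_involution (n d : ℕ) (hd : d ≤ n) :
    (∀ T, IsRectSSYT d n T → ∃ S, IsRectSSYT (n - d) n S ∧ GammaColRule n d (n - d) T S) ∧
    (∀ T S S', IsRectSSYT d n T → IsRectSSYT (n - d) n S → IsRectSSYT (n - d) n S' →
      GammaColRule n d (n - d) T S → GammaColRule n d (n - d) T S' → S = S') ∧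
    (∀ T S, IsRectSSYT d n T → IsRectSSYT (n - d) n S → GammaColRule n d (n - d) T S →
      GammaColRule n (n - d) d S T) := by
  refine ⟨?_, ?_, ?_⟩
  · intro T hT
    exact ⟨gammaS n d T, gammaS_rect hT hd, gammaS_rule hT hd⟩
  · intro T S S' hT hS hS' hr hr'
    exact gamma_unique hd T S S' hT hS hS' hr hr'
  · intro T S hT hS hr
    exact gamma_inv hd T S hT hS hr
end

section
/- If T is an SSYT with columns C₁,…,C_c ⊆ {1,…,n} (so for adjacent columns, the i-th smallest element of C_j is ≤ the i-th smallest element of C_{j+1} whenever both exist, and |C_j| ≥ |C_{j+1}|), then the complemented reversed family D_j = {1,…,n} \ C_{c+1−j} again satisfies the SSYT column conditions: |D_j| ≥ |D_{j+1}| and the i-th smallest element of D_j is ≤ the i-th smallest element of D_{j+1} whenever both exist. -/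
/-!
A column `A` may stand left of a column `B` exactly when, for every `m`, `B` has at most as many
entries `≤ m` as `A` has. Inside `{1, …, n}` the number of entries `≤ m` of a complement is
`min n m` minus that of the set itself, so complementing reverses these inequalities: the
complemented columns fit together when read in the opposite order.
-/

/-- The `i`-th smallest element (0-indexed) of a finite set of naturals. -/
def kthSmallest (s : Finset ℕ) (i : ℕ) : ℕ :=
  (s.sort (· ≤ ·)).getD i 0

open Finset

theorem Monotone.lt_card_filter_le_iff {α : Type*} [LinearOrder α] {k : ℕ} {f : Fin k → α}
    (hf : Monotone f) (i : Fin k) (m : α) : (i : ℕ) < #{j | f j ≤ m} ↔ f i ≤ m := by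
  constructor
  · contrapose!
    intro hm
    calc #{j | f j ≤ m} ≤ #(Iio i) := card_le_card fun j hj => by
          simp only [mem_filter, mem_univ, true_and] at hj
          exact mem_Iio.2 (lt_of_not_ge fun hij => (hm.trans_le (hf hij)).not_ge hj)
      _ = i := Fin.card_Iio i
  · intro hm
    calc (i : ℕ) < #(Iic i) := by simp
      _ ≤ #{j | f j ≤ m} := card_le_card fun j hj => by
          simpa using (hf (mem_Iic.1 hj)).trans hm

theorem kthSmallest_le_iff {s : Finset ℕ} {i : ℕ} (hi : i < #s) (m : ℕ) :
    kthSmallest s i ≤ m ↔ i < #{x ∈ s | x ≤ m} := by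
  set f := s.orderEmbOfFin rfl
  have hkth : kthSmallest s i = f ⟨i, hi⟩ := by
    simp [kthSmallest, f, orderEmbOfFin_apply, List.getD_eq_getElem?_getD, hi]
  have hcount : #{x ∈ s | x ≤ m} = #{j | f j ≤ m} := by
    conv_lhs => rw [← map_orderEmbOfFin_univ s rfl, filter_map, card_map]
    rfl
  rw [hkth, hcount]
  exact (f.monotone.lt_card_filter_le_iff ⟨i, hi⟩ m).symm

/-- `A` may stand immediately to the left of `B` in a semistandard Young tableau. -/
def ColumnLE (A B : Finset ℕ) : Prop :=
  #B ≤ #A ∧ ∀ i < #B, kthSmallest A i ≤ kthSmallest B i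

theorem columnLE_iff_card_filter_le {A B : Finset ℕ} :
    ColumnLE A B ↔ ∀ m, #{x ∈ B | x ≤ m} ≤ #{x ∈ A | x ≤ m} := by
  constructor
  · rintro ⟨hcard, hkth⟩ m
    obtain hzero | hpos := Nat.eq_zero_or_pos #{x ∈ B | x ≤ m}
    · omega
    have hlt : #{x ∈ B | x ≤ m} - 1 < #B := by
      have hle := card_filter_le B (· ≤ m)
      omega
    have hB := (kthSmallest_le_iff hlt m).2 (by omega)
    have hA := (kthSmallest_le_iff (hlt.trans_le hcard) m).1 ((hkth _ hlt).trans hB)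
    omega
  · intro hcount
    have hcard : #B ≤ #A := by
      have hfull : {x ∈ B | x ≤ B.sup id} = B :=
        filter_true_of_mem fun x hx => le_sup (f := id) hx
      calc #B = #{x ∈ B | x ≤ B.sup id} := by rw [hfull]
        _ ≤ #{x ∈ A | x ≤ B.sup id} := hcount _
        _ ≤ #A := card_filter_le A _
    refine ⟨hcard, fun i hi => ?_⟩
    rw [kthSmallest_le_iff (hi.trans_le hcard)]
    exact ((kthSmallest_le_iff hi _).1 le_rfl).trans_le (hcount _)

theorem card_filter_sdiff {α : Type*} [DecidableEq α] {U A : Finset α} (hA : A ⊆ U)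
    (p : α → Prop) [DecidablePred p] :
    #{x ∈ U \ A | p x} = #{x ∈ U | p x} - #{x ∈ A | p x} := by
  rw [← card_sdiff_of_subset (filter_subset_filter p hA)]
  congr 1
  ext x
  simp only [mem_filter, mem_sdiff]
  tauto

theorem ColumnLE.sdiff {U A B : Finset ℕ} (hA : A ⊆ U) (hB : B ⊆ U) (h : ColumnLE A B) :
    ColumnLE (U \ B) (U \ A) := by
  rw [columnLE_iff_card_filter_le] at h ⊢
  intro m
  rw [card_filter_sdiff hA, card_filter_sdiff hB]
  have hAU := card_le_card (filter_subset_filter (· ≤ m) hA)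
  have hBA := h m
  omega

/-- If `C 1, …, C c ⊆ {1,…,n}` satisfy the SSYT column conditions (weakly decreasing sizes,
and the `i`-th smallest element of a column is at most the `i`-th smallest element of the
next column), then the complemented reversed family `D j = {1,…,n} \ C (c+1-j)` again
satisfies the SSYT column conditions. -/
theorem boxcomp_preserves_ssyt_columns (n c : ℕ) (C : ℕ → Finset ℕ)
    (hsub : ∀ j, 1 ≤ j → j ≤ c → C j ⊆ Finset.Icc 1 n)
    (hcard : ∀ j, 1 ≤ j → j + 1 ≤ c → (C (j + 1)).card ≤ (C j).card)
    (hcols : ∀ j i, 1 ≤ j → j + 1 ≤ c → i < (C (j + 1)).card →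
      kthSmallest (C j) i ≤ kthSmallest (C (j + 1)) i) :
    (∀ j, 1 ≤ j → j + 1 ≤ c →
      (Finset.Icc 1 n \ C (c + 1 - (j + 1))).card ≤ (Finset.Icc 1 n \ C (c + 1 - j)).card) ∧
    (∀ j i, 1 ≤ j → j + 1 ≤ c → i < (Finset.Icc 1 n \ C (c + 1 - (j + 1))).card →
      kthSmallest (Finset.Icc 1 n \ C (c + 1 - j)) i ≤
        kthSmallest (Finset.Icc 1 n \ C (c + 1 - (j + 1))) i) := by
  have hcomp : ∀ j, 1 ≤ j → j + 1 ≤ c →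
      ColumnLE (Icc 1 n \ C (c + 1 - j)) (Icc 1 n \ C (c + 1 - (j + 1))) := by
    intro j hj hjc
    have hleft : c + 1 - (j + 1) = c - j := by omega
    have hright : c + 1 - j = c - j + 1 := by omega
    rw [hleft, hright]
    exact ColumnLE.sdiff (hsub _ (by omega) (by omega)) (hsub _ (by omega) (by omega))
      ⟨hcard _ (by omega) (by omega), fun i => hcols _ i (by omega) (by omega)⟩
  exact ⟨fun j hj hjc => (hcomp j hj hjc).1, fun j i hj hjc => (hcomp j hj hjc).2 i⟩
end
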